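/- Every homogeneous tetrahedron has at least two vertices that are equilibrium points with respect to its centroid; that is, for a tetrahedron T with centroid c, there exist at least two vertices q of T such that the plane through q perpendicular to q − c supports T at q. -/

import Mathlib

/-! Write `v k = p k - c`. Since a half-space is convex, `p i` is an equilibrium point as soon as
`⟪v k, v i⟫ ≤ ‖v i‖ ^ 2` for every vertex `k`. By Cauchy–Schwarz this holds for the vertex `i`
farthest from `c`, and, against every `k ≠ i`, for the second farthest vertex `j`. For `k = i`,
`∑ v = 0` gives `‖v i + v j‖ = ‖v l + v m‖ ≤ 2 ‖v j‖` for the remaining vertices `l, m`; squaring,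
`2 ⟪v i, v j⟫ ≤ 3 ‖v j‖ ^ 2 - ‖v i‖ ^ 2 ≤ 2 ‖v j‖ ^ 2`. -/

open scoped RealInnerProductSpace

noncomputable section

abbrev E3 := EuclideanSpace ℝ (Fin 3)

/-- Vertex `q` of the convex body `T` is an equilibrium point with respect to `c`:
the plane through `q` perpendicular to `q - c` supports `T` at `q`. -/
def IsVertexEquil (T : Set E3) (c q : E3) : Prop :=
  ∀ x ∈ T, ⟪x - q, q - c⟫ ≤ 0

open Finset

theorem Finset.sum_vsub_centroid_eq_zero {k V P ι : Type*} [DivisionRing k] [CharZero k]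
    [AddCommGroup V] [Module k V] [AddTorsor V P] {s : Finset ι} (hs : s.Nonempty) (p : ι → P) :
    ∑ i ∈ s, (p i -ᵥ s.centroid k p) = 0 := by
  have h := s.affineCombination_eq_weightedVSubOfPoint_vadd_of_sum_eq_one (s.centroidWeights k) p
    (s.sum_centroidWeights_eq_one_of_nonempty k hs) (s.centroid k p)
  rw [← centroid_def, eq_vadd_iff_vsub_eq, vsub_self, weightedVSubOfPoint_apply] at h
  simp_rw [centroidWeights_apply, ← smul_sum] at h
  exact (smul_eq_zero.mp h.symm).resolve_left (by simp [hs.ne_empty])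

theorem IsVertexEquil.convexHull {s : Set E3} {c q : E3} (h : IsVertexEquil s c q) :
    IsVertexEquil (convexHull ℝ s) c q := by
  have hconv : Convex ℝ {x : E3 | ⟪x, q - c⟫ ≤ ⟪q, q - c⟫} :=
    convex_halfSpace_le ⟨fun x y => inner_add_left x y _, fun r x => real_inner_smul_left x _ r⟩ _
  intro x hx
  rw [inner_sub_left, sub_nonpos]
  refine convexHull_min (fun y hy => ?_) hconv hx
  have hy' := h y hy
  rwa [inner_sub_left, sub_nonpos] at hy'

theorem norm_add_le_of_sum_eq_zero {F ι : Type*} [SeminormedAddCommGroup F] [Fintype ι]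
    [DecidableEq ι] {v : ι → F} (hv : ∑ k, v k = 0) {i j : ι} (hij : i ≠ j) {r : ℝ}
    (hr : ∀ k, k ≠ i → k ≠ j → ‖v k‖ ≤ r) :
    ‖v i + v j‖ ≤ (Fintype.card ι - 2 : ℕ) * r := by
  have hj : j ∈ univ.erase i := mem_erase.2 ⟨hij.symm, mem_univ j⟩
  have hsplit : v i + v j + ∑ k ∈ (univ.erase i).erase j, v k = 0 := by
    rw [add_assoc, add_sum_erase _ _ hj, add_sum_erase _ _ (mem_univ i), hv]
  rw [eq_neg_of_add_eq_zero_left hsplit, norm_neg]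
  calc ‖∑ k ∈ (univ.erase i).erase j, v k‖
      ≤ ∑ k ∈ (univ.erase i).erase j, ‖v k‖ := norm_sum_le _ _
    _ ≤ #((univ.erase i).erase j) • r := sum_le_card_nsmul _ _ _ fun k hk =>
        hr k (ne_of_mem_erase (mem_of_mem_erase hk)) (ne_of_mem_erase hk)
    _ = (Fintype.card ι - 2 : ℕ) * r := by
        rw [card_erase_of_mem hj, card_erase_of_mem (mem_univ i), card_univ, nsmul_eq_mul]
        rfl

section

variable {F : Type*} [NormedAddCommGroup F] [InnerProductSpace ℝ F]

theorem real_inner_le_norm_sq_of_norm_le {a b : F} (h : ‖a‖ ≤ ‖b‖) : ⟪a, b⟫ ≤ ‖b‖ ^ 2 :=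
  (real_inner_le_norm a b).trans (by rw [sq]; gcongr)

theorem real_inner_le_norm_sq_of_norm_add_le {a b : F} (hba : ‖b‖ ≤ ‖a‖)
    (hab : ‖a + b‖ ≤ 2 * ‖b‖) : ⟪a, b⟫ ≤ ‖b‖ ^ 2 := by
  have hsq : ‖a + b‖ ^ 2 ≤ (2 * ‖b‖) ^ 2 := pow_le_pow_left₀ (norm_nonneg _) hab 2
  have hba_sq : ‖b‖ ^ 2 ≤ ‖a‖ ^ 2 := pow_le_pow_left₀ (norm_nonneg _) hba 2
  rw [norm_add_sq_real] at hsq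
  linarith

end

theorem isVertexEquil_of_forall_inner_le {ι : Type*} {p : ι → E3} {c : E3} {i : ι}
    (h : ∀ k, ⟪p k - c, p i - c⟫ ≤ ‖p i - c‖ ^ 2) :
    IsVertexEquil (convexHull ℝ (Set.range p)) c (p i) := by
  refine IsVertexEquil.convexHull ?_
  rintro _ ⟨k, rfl⟩
  rw [← sub_sub_sub_cancel_right (p k) (p i) c, inner_sub_left, real_inner_self_eq_norm_sq]
  exact sub_nonpos.2 (h k)

theorem tetrahedron_two_unstable_general (p : Fin 4 → E3) :
    ∃ i j : Fin 4, i ≠ j ∧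
      IsVertexEquil (convexHull ℝ (Set.range p)) (Finset.univ.centroid ℝ p) (p i) ∧
      IsVertexEquil (convexHull ℝ (Set.range p)) (Finset.univ.centroid ℝ p) (p j) := by
  set v : Fin 4 → E3 := fun k => p k - univ.centroid ℝ p
  have hv : ∑ k, v k = 0 := sum_vsub_centroid_eq_zero univ_nonempty p
  obtain ⟨i, -, hi⟩ := exists_max_image univ (‖v ·‖) univ_nonempty
  obtain ⟨j, hj, hj_max⟩ := exists_max_image (univ.erase i) (‖v ·‖) univ_nontrivial.erase_nonempty
  have hji : j ≠ i := ne_of_mem_erase hj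
  refine ⟨i, j, hji.symm,
    isVertexEquil_of_forall_inner_le fun k => real_inner_le_norm_sq_of_norm_le (hi k (mem_univ k)),
    isVertexEquil_of_forall_inner_le fun k => ?_⟩
  rcases eq_or_ne k i with rfl | hki
  · have h_sum := norm_add_le_of_sum_eq_zero hv hji.symm
      fun l hli _ => hj_max l (mem_erase.2 ⟨hli, mem_univ l⟩)
    rw [Fintype.card_fin, show 4 - 2 = 2 from rfl, Nat.cast_ofNat] at h_sum
    exact real_inner_le_norm_sq_of_norm_add_le (hi j (mem_univ j)) h_sum
  · exact real_inner_le_norm_sq_of_norm_le (hj_max k (mem_erase.2 ⟨hki, mem_univ k⟩))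

/-- Every homogeneous tetrahedron has at least two vertices that are equilibrium
points with respect to its centroid. -/
theorem tetrahedron_two_unstable (p : Fin 4 → E3) (hp : AffineIndependent ℝ p) :
    ∃ i j : Fin 4, i ≠ j ∧
      IsVertexEquil (convexHull ℝ (Set.range p)) (Finset.univ.centroid ℝ p) (p i) ∧
      IsVertexEquil (convexHull ℝ (Set.range p)) (Finset.univ.centroid ℝ p) (p j) :=
  tetrahedron_two_unstable_general p
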